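/- For 1 < p ∈ ℝ and G a finitely generated infinite group, the first reduced ℓ^p-cohomology H̄¹_{(p)}(G) is nonzero if and only if there exists a nonzero continuous right-translation-invariant linear functional on the Banach space D_p(G)/ℂ. -/

import Mathlib

open Filter Topology

namespace PHB

variable {G : Type*} [Group G]

/-- One Dirichlet term `‖f(gs⁻¹) − f(g)‖^p`. -/
noncomputable def dpTerm (p : ℝ) (f : G → ℂ) (s g : G) : ℝ := ‖f (g * s⁻¹) - f g‖ ^ p

/-- Membership in `D_p(G)`. -/
def MemDp (p : ℝ) (S : Finset G) (f : G → ℂ) : Prop :=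
  ∀ s ∈ S, Summable (dpTerm p f s)

/-- The Dirichlet `p`-sum `∑_{s∈S}∑_{g∈G} ‖f(gs⁻¹) − f(g)‖^p`. -/
noncomputable def dirSum (p : ℝ) (S : Finset G) (f : G → ℂ) : ℝ :=
  ∑ s ∈ S, ∑' g, dpTerm p f s g

/-- The `D_p`-norm `(∑_{s,g}|f(gs⁻¹)−f(g)|^p + |f(e)|^p)^{1/p}`. -/
noncomputable def dpNorm (p : ℝ) (S : Finset G) (f : G → ℂ) : ℝ :=
  (dirSum p S f + ‖f 1‖ ^ p) ^ (1/p)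

/-- The norm on `D_p(G)/ℂ`: `(∑_{s,g}|f(gs⁻¹)−f(g)|^p)^{1/p}`. -/
noncomputable def qNorm (p : ℝ) (S : Finset G) (f : G → ℂ) : ℝ :=
  dirSum p S f ^ (1/p)

/-- Boundedness of a function. -/
def BddFun (f : G → ℂ) : Prop := ∃ M : ℝ, ∀ g, ‖f g‖ ≤ M

/-- The sup norm. -/
noncomputable def supNorm (f : G → ℂ) : ℝ := ⨆ g, ‖f g‖

/-- The `BD_p`-norm `‖f‖_∞ + (∑_{s,g}|f(gs⁻¹)−f(g)|^p)^{1/p}`. -/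
noncomputable def bdpNorm (p : ℝ) (S : Finset G) (f : G → ℂ) : ℝ :=
  supNorm f + dirSum p S f ^ (1/p)

/-- Membership in `BD_p(G)`: bounded and finite Dirichlet `p`-sum. -/
def MemBDp (p : ℝ) (S : Finset G) (f : G → ℂ) : Prop := BddFun f ∧ MemDp p S f

/-- Membership in `ℓ^p(G)`. -/
def MemLp' (p : ℝ) (f : G → ℂ) : Prop := Summable fun g => ‖f g‖ ^ p

/-- `f` lies in the `D_p`-closure of the finitely supported functions `ℂG`. -/
def InClosCG (p : ℝ) (S : Finset G) (f : G → ℂ) : Prop :=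
  MemDp p S f ∧ ∀ ε : ℝ, 0 < ε →
    ∃ h : G → ℂ, (Function.support h).Finite ∧ dpNorm p S (f - h) < ε

/-- `f` is a bounded function in the `D_p`-closure of `ℂG`. -/
def InBClosCG (p : ℝ) (S : Finset G) (f : G → ℂ) : Prop := BddFun f ∧ InClosCG p S f

/-- `f` lies in the `D_p`-closure of `ℓ^p(G)`. -/
def InClosLp (p : ℝ) (S : Finset G) (f : G → ℂ) : Prop :=
  MemDp p S f ∧ ∀ ε : ℝ, 0 < ε →
    ∃ h : G → ℂ, MemLp' p h ∧ dpNorm p S (f - h) < ε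

/-- `f` is a bounded function in the `D_p`-closure of `ℓ^p(G)`. -/
def InBClosLp (p : ℝ) (S : Finset G) (f : G → ℂ) : Prop := BddFun f ∧ InClosLp p S f

/-- `f` lies in the `D_p`-closure of `ℓ^p(G) ⊕ ℂ`. -/
def InClosLpC (p : ℝ) (S : Finset G) (f : G → ℂ) : Prop :=
  MemDp p S f ∧ ∀ ε : ℝ, 0 < ε →
    ∃ (h : G → ℂ) (c : ℂ), MemLp' p h ∧ dpNorm p S (f - h - Function.const G c) < ε

/-- A character (nonzero multiplicative linear functional) on `BD_p(G)`. -/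
structure BDpChar (p : ℝ) (S : Finset G) where
  toFun : {f : G → ℂ // MemBDp p S f} → ℂ
  map_add : ∀ (f h : {f : G → ℂ // MemBDp p S f}) (hm : MemBDp p S (f.1 + h.1)),
    toFun ⟨f.1 + h.1, hm⟩ = toFun f + toFun h
  map_mul : ∀ (f h : {f : G → ℂ // MemBDp p S f}) (hm : MemBDp p S (f.1 * h.1)),
    toFun ⟨f.1 * h.1, hm⟩ = toFun f * toFun h
  map_smul : ∀ (c : ℂ) (f : {f : G → ℂ // MemBDp p S f}) (hm : MemBDp p S (c • f.1)),
    toFun ⟨c • f.1, hm⟩ = c * toFun f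
  map_one : ∀ hm : MemBDp p S (1 : G → ℂ), toFun ⟨1, hm⟩ = 1

/-- The weak-* topology on the spectrum `Sp(BD_p(G))`. -/
noncomputable instance (p : ℝ) (S : Finset G) : TopologicalSpace (BDpChar p S) :=
  TopologicalSpace.induced BDpChar.toFun Pi.topologicalSpace

/-- The evaluation embedding `i : G → Sp(BD_p(G))`, `(i g)(f) = f(g)`. -/
def evalChar (p : ℝ) (S : Finset G) (g : G) : BDpChar p S where
  toFun := fun f => f.1 g
  map_add := fun _ _ _ => rfl
  map_mul := fun _ _ _ => rfl
  map_smul := fun _ _ _ => rfl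
  map_one := fun _ => rfl

/-- The `p`-Laplacian `Δ_p f(g) = ∑_{s∈S} |f(gs⁻¹)−f(g)|^{p−2}(f(gs⁻¹)−f(g))`. -/
noncomputable def pLap (p : ℝ) (S : Finset G) (f : G → ℂ) (g : G) : ℂ :=
  ∑ s ∈ S, ((‖f (g * s⁻¹) - f g‖ ^ (p - 2) : ℝ) : ℂ) * (f (g * s⁻¹) - f g)

/-- `f` is `p`-harmonic: `f ∈ D_p(G)` and `Δ_p f ≡ 0`. -/
def PHarmonic (p : ℝ) (S : Finset G) (f : G → ℂ) : Prop :=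
  MemDp p S f ∧ ∀ g, pLap p S f g = 0

/-- The `p`-harmonic boundary `∂_p(G) ⊆ Sp(BD_p(G)) \ G`. -/
def pBoundary (p : ℝ) (S : Finset G) : Set (BDpChar p S) :=
  {x | (∀ g : G, x ≠ evalChar p S g) ∧
    ∀ (f : G → ℂ) (hf : MemBDp p S f), InBClosCG p S f → x.toFun ⟨f, hf⟩ = 0}

/-- The word metric on `G` with respect to the generating set `S`. -/
noncomputable def wordDist (S : Finset G) (x y : G) : ℕ :=
  sInf {n | ∃ l : List G, (∀ a ∈ l, a ∈ S) ∧ l.length = n ∧ x⁻¹ * y = l.prod}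

/-- The word length `|g| = d(e,g)`. -/
noncomputable def wordLen (S : Finset G) (g : G) : ℕ := wordDist S 1 g

/-- Right translation `f_x(g) = f(gx⁻¹)`. -/
def translateFun (f : G → ℂ) (x : G) : G → ℂ := fun g => f (g * x⁻¹)

/-- `φ : G → H` is a rough isometry with constants `a, b, c` for the word metrics. -/
def RoughIsom {G H : Type*} [Group G] [Group H] (S : Finset G) (T : Finset H)
    (φ : G → H) (a b c : ℝ) : Prop :=
  1 ≤ a ∧ 0 ≤ b ∧ 0 < c ∧
  (∀ x y : G, (1/a) * (wordDist S x y : ℝ) - b ≤ (wordDist T (φ x) (φ y) : ℝ) ∧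
    (wordDist T (φ x) (φ y) : ℝ) ≤ a * (wordDist S x y : ℝ) + b) ∧
  ∀ h : H, ∃ x : G, (wordDist T (φ x) h : ℝ) < c

/-- `S` is a symmetric generating set of `G`. -/
def SymmGen (S : Finset G) : Prop :=
  (∀ s ∈ S, s⁻¹ ∈ S) ∧ Subgroup.closure (S : Set G) = ⊤

end PHB

/-!
The coboundary `d f = (f(gs⁻¹) - f(g))_{(s,g)}` embeds `D_p(G)/ℂ` isometrically into
`ℓ^p(S × G)`. If `f` is not in the closure of `ℓ^p(G) ⊕ ℂ`, Hahn–Banach gives a functional on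
`ℓ^p(S × G)` that kills `d(ℓ^p(G))` but not `d f`; composed with `d` it is translation invariant
because `f_x - f ∈ ℓ^p(G)` whenever `S` generates `G`.

Conversely, a bounded translation-invariant `T` takes the same value on every Dirac mass. A sum of
`n` Dirac masses has `ℓ^p`-norm `n^(1/p) = o(n)` for `p > 1` and `d` is bounded on `ℓ^p(G)`, so
that value is `0`; by density `T` vanishes on `ℓ^p(G)`, hence on the closure of `ℓ^p(G) ⊕ ℂ`.
-/

open scoped lp

theorem eq_zero_of_forall_natCast_mul_le_rpow {a M r : ℝ} (ha : 0 ≤ a) (hr : r < 1)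
    (h : ∀ n : ℕ, n * a ≤ M * (n : ℝ) ^ r) : a = 0 := by
  have hlim : Tendsto (fun n : ℕ => M * (n : ℝ) ^ (r - 1)) atTop (𝓝 0) := by
    have := ((tendsto_rpow_neg_atTop (sub_pos.2 hr)).comp
      tendsto_natCast_atTop_atTop).const_mul M
    simpa [Function.comp_def] using this
  refine le_antisymm (ge_of_tendsto hlim ?_) ha
  filter_upwards [eventually_gt_atTop 0] with n hn
  have hn : (0 : ℝ) < n := Nat.cast_pos.2 hn
  rw [Real.rpow_sub_one hn.ne', mul_div_assoc', le_div_iff₀ hn, mul_comm a]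
  exact h n

theorem Submodule.exists_strongDual_eq_zero_of_notMem_topologicalClosure {𝕜 E : Type*}
    [RCLike 𝕜] [NormedAddCommGroup E] [NormedSpace 𝕜 E] (W : Submodule 𝕜 E) {x : E}
    (hx : x ∉ W.topologicalClosure) : ∃ g : StrongDual 𝕜 E, (∀ w ∈ W, g w = 0) ∧ g x ≠ 0 := by
  set V := W.topologicalClosure
  have : IsClosed (V : Set E) := W.isClosed_topologicalClosure
  have hx' : V.mkQ x ≠ 0 := by rwa [Ne, Submodule.mkQ_apply, Submodule.Quotient.mk_eq_zero]
  obtain ⟨h, -, hhx⟩ := exists_dual_vector 𝕜 (V.mkQ x) (norm_ne_zero_iff.2 hx')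
  refine ⟨h.comp V.mkQL, fun w hw => ?_, ?_⟩
  · simp [(Submodule.Quotient.mk_eq_zero V).2 (W.le_topologicalClosure hw)]
  · rw [ContinuousLinearMap.comp_apply, Submodule.mkQL_apply, hhx]
    exact RCLike.ofReal_ne_zero.2 (norm_ne_zero_iff.2 hx')

section lp

variable {α 𝕜 F : Type*} [RCLike 𝕜] [NormedAddCommGroup F] [NormedSpace 𝕜 F] [DecidableEq α]
  {p : ENNReal} [Fact (1 ≤ p)]

theorem lp.continuousLinearMap_eq_zero_of_single_one (hp : p ≠ ⊤)
    {L : lp (fun _ : α => 𝕜) p →L[𝕜] F} (hL : ∀ i, L (lp.single p i 1) = 0) : L = 0 := by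
  refine ContinuousLinearMap.ext fun x => ?_
  have hsingle : ∀ i, L (lp.single p i (x i)) = 0 := fun i => by
    rw [← mul_one (x i), ← smul_eq_mul, lp.single_smul, map_smul, hL, smul_zero]
  have hsum : HasSum (fun i => L (lp.single p i (x i))) (L x) :=
    (lp.hasSum_single hp x).map L L.continuous
  simp only [hsingle] at hsum
  exact hsum.unique hasSum_zero

/-- On `ℓ^p` with `1 < p`, a sum of `n` basis vectors has norm `n ^ (1/p) = o(n)`. -/
theorem lp.eq_zero_of_forall_apply_single_one_eq [Infinite α] (hp1 : 1 < p) (hp : p ≠ ⊤)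
    (L : StrongDual 𝕜 (lp (fun _ : α => 𝕜) p)) {a : 𝕜} (hL : ∀ i, L (lp.single p i 1) = a) :
    a = 0 := by
  have hq : 1 < p.toReal := by
    simpa using ENNReal.toReal_strict_mono hp hp1
  have hq0 : p.toReal ≠ 0 := (zero_lt_one.trans hq).ne'
  refine norm_eq_zero.1 (eq_zero_of_forall_natCast_mul_le_rpow (M := ‖L‖) (norm_nonneg a)
    (inv_lt_one_of_one_lt₀ hq) fun n => ?_)
  set s := (Finset.range n).map (Infinite.natEmbedding α)
  set v := ∑ i ∈ s, lp.single p i (1 : 𝕜)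
  have hLv : L v = n * a := by simp [v, s, hL]
  have hv : ‖v‖ = (n : ℝ) ^ p.toReal⁻¹ := by
    have := lp.norm_sum_single (zero_lt_one.trans hq) (fun _ => (1 : 𝕜)) s
    simp only [norm_one, Real.one_rpow, Finset.sum_const, nsmul_eq_mul, mul_one,
      Finset.card_map, Finset.card_range, s] at this
    rw [← this, Real.rpow_rpow_inv (norm_nonneg _) hq0]
  calc (n : ℝ) * ‖a‖ = ‖L v‖ := by rw [hLv, norm_mul, RCLike.norm_natCast]
    _ ≤ ‖L‖ * ‖v‖ := L.le_opNorm v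
    _ = ‖L‖ * (n : ℝ) ^ p.toReal⁻¹ := by rw [hv]

end lp

namespace PHB

theorem memLp'_iff_memℓp {α : Type*} {p : ℝ} (hp : 0 < p) {u : α → ℂ} :
    MemLp' p u ↔ Memℓp u (.ofReal p) := by
  rw [memℓp_gen_iff (by rwa [ENNReal.toReal_ofReal hp.le]), ENNReal.toReal_ofReal hp.le, MemLp']

variable {G : Type*} [Group G] {p : ℝ} {S : Finset G}

theorem translateFun_single [DecidableEq G] (x : G) :
    translateFun (Pi.single 1 1) x = Pi.single x (1 : ℂ) := by
  ext g; simp [translateFun, Pi.single_apply, mul_inv_eq_one]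

theorem memℓp_translateFun (hp : 0 < p) {u : G → ℂ} (hu : Memℓp u (.ofReal p)) (x : G) :
    Memℓp (translateFun u x) (.ofReal p) := by
  rw [← memLp'_iff_memℓp hp] at hu ⊢
  exact (Equiv.mulRight x⁻¹).summable_iff.2 hu

theorem memDp_iff_forall_memℓp (hp : 0 < p) {f : G → ℂ} :
    MemDp p S f ↔ ∀ s ∈ S, Memℓp (translateFun f s - f) (.ofReal p) := by
  simp only [← memLp'_iff_memℓp hp]
  rfl

theorem memDp_of_memℓp (hp : 0 < p) {u : G → ℂ} (hu : Memℓp u (.ofReal p)) : MemDp p S u :=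
  (memDp_iff_forall_memℓp hp).2 fun s _ => (memℓp_translateFun hp hu s).sub hu

/-- The difference `f_x - f` lies in `ℓ^p` for every `x`, since it does for `x ∈ S` and
`f_{xy} - f = (f_x - f)_y + (f_y - f)`. -/
theorem memℓp_translateFun_sub (hp : 0 < p) (hS : Subgroup.closure (S : Set G) = ⊤)
    {f : G → ℂ} (hf : MemDp p S f) (x : G) : Memℓp (translateFun f x - f) (.ofReal p) := by
  have hx : x ∈ Subgroup.closure (S : Set G) := hS ▸ Subgroup.mem_top x
  induction hx using Subgroup.closure_induction with
  | mem s hs => exact (memDp_iff_forall_memℓp hp).1 hf s hs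
  | one =>
      have : translateFun f 1 - f = 0 := by ext g; simp [translateFun]
      rw [this]
      exact zero_memℓp
  | mul x y _ _ hx hy =>
      have : translateFun f (x * y) - f
          = translateFun (translateFun f x - f) y + (translateFun f y - f) := by
        ext g; simp [translateFun, mul_assoc]
      rw [this]
      exact (memℓp_translateFun hp hx y).add hy
  | inv x _ hx =>
      have : translateFun f x⁻¹ - f = -translateFun (translateFun f x - f) x⁻¹ := by
        ext g; simp [translateFun]
      rw [this]
      exact (memℓp_translateFun hp hx x⁻¹).neg

/-- The coboundary `d` of the paper; `S × G` indexes the edges of the Cayley graph. -/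
def grad (S : Finset G) : (G → ℂ) →ₗ[ℂ] (S × G → ℂ) where
  toFun f i := f (i.2 * (i.1 : G)⁻¹) - f i.2
  map_add' f h := by ext; simp only [Pi.add_apply]; ring
  map_smul' c f := by ext; simp only [Pi.smul_apply, smul_eq_mul, RingHom.id_apply]; ring

theorem grad_const (c : ℂ) : grad S (Function.const G c) = 0 :=
  funext fun _ => sub_self c

theorem memDp_iff_memℓp_grad (hp : 0 < p) {f : G → ℂ} :
    MemDp p S f ↔ Memℓp (grad S f) (.ofReal p) := by
  rw [memℓp_gen_iff (by rwa [ENNReal.toReal_ofReal hp.le]), ENNReal.toReal_ofReal hp.le,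
    summable_prod_of_nonneg fun _ => by positivity]
  simp only [Summable.of_finite, and_true]
  exact ⟨fun hf s => hf s s.2, fun hf s hs => hf ⟨s, hs⟩⟩

theorem memDp_add (hp : 0 < p) {f h : G → ℂ} (hf : MemDp p S f) (hh : MemDp p S h) :
    MemDp p S (f + h) := by
  rw [memDp_iff_memℓp_grad hp, map_add] at *
  exact hf.add hh

theorem memDp_sub (hp : 0 < p) {f h : G → ℂ} (hf : MemDp p S f) (hh : MemDp p S h) :
    MemDp p S (f - h) := by
  rw [memDp_iff_memℓp_grad hp, map_sub] at *
  exact hf.sub hh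

theorem memDp_smul (hp : 0 < p) (c : ℂ) {f : G → ℂ} (hf : MemDp p S f) : MemDp p S (c • f) := by
  rw [memDp_iff_memℓp_grad hp, map_smul] at *
  exact hf.const_smul c

theorem memDp_const (hp : 0 < p) (c : ℂ) : MemDp p S (Function.const G c) := by
  rw [memDp_iff_memℓp_grad hp, grad_const]
  exact zero_memℓp

theorem memDp_translateFun (hp : 0 < p) (hS : Subgroup.closure (S : Set G) = ⊤)
    {f : G → ℂ} (hf : MemDp p S f) (x : G) : MemDp p S (translateFun f x) := by
  simpa using memDp_add hp (memDp_of_memℓp hp (memℓp_translateFun_sub hp hS hf x)) hf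

theorem dirSum_nonneg (f : G → ℂ) : 0 ≤ dirSum p S f :=
  Finset.sum_nonneg fun _ _ => tsum_nonneg fun _ => Real.rpow_nonneg (norm_nonneg _) p

theorem qNorm_le_dpNorm (hp : 0 < p) (f : G → ℂ) : qNorm p S f ≤ dpNorm p S f :=
  Real.rpow_le_rpow (dirSum_nonneg f)
    (le_add_of_nonneg_right (Real.rpow_nonneg (norm_nonneg _) p)) (by positivity)

theorem dpNorm_sub_const_apply_one (hp : 0 < p) (f : G → ℂ) :
    dpNorm p S (f - Function.const G (f 1)) = qNorm p S f := by
  simp [dpNorm, qNorm, dirSum, dpTerm, Real.zero_rpow hp.ne']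

section lp

theorem pos_of_one_le_ofReal [Fact (1 ≤ ENNReal.ofReal p)] : 0 < p :=
  zero_lt_one.trans_le (ENNReal.one_le_ofReal.1 Fact.out)

variable [Fact (1 ≤ ENNReal.ofReal p)]

def gradLp (f : G → ℂ) (hf : MemDp p S f) : ℓ^(.ofReal p)(S × G, ℂ) :=
  ⟨grad S f, (memDp_iff_memℓp_grad pos_of_one_le_ofReal).1 hf⟩

theorem gradLp_add {f h : G → ℂ} (hf : MemDp p S f) (hh : MemDp p S h) :
    gradLp (f + h) (memDp_add pos_of_one_le_ofReal hf hh) = gradLp f hf + gradLp h hh :=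
  lp.ext (map_add _ _ _)

theorem gradLp_sub {f h : G → ℂ} (hf : MemDp p S f) (hh : MemDp p S h) :
    gradLp (f - h) (memDp_sub pos_of_one_le_ofReal hf hh) = gradLp f hf - gradLp h hh :=
  lp.ext (map_sub _ _ _)

theorem gradLp_smul (c : ℂ) {f : G → ℂ} (hf : MemDp p S f) :
    gradLp (c • f) (memDp_smul pos_of_one_le_ofReal c hf) = c • gradLp f hf :=
  lp.ext (map_smul _ _ _)

theorem norm_gradLp (f : G → ℂ) (hf : MemDp p S f) : ‖gradLp f hf‖ = qNorm p S f := by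
  have hp : 0 < p := pos_of_one_le_ofReal
  have hp' : 0 < (ENNReal.ofReal p).toReal := by rwa [ENNReal.toReal_ofReal hp.le]
  have hsum := ((memDp_iff_memℓp_grad hp).1 hf).summable hp'
  rw [ENNReal.toReal_ofReal hp.le] at hsum
  rw [lp.norm_eq_tsum_rpow hp', ENNReal.toReal_ofReal hp.le, qNorm, dirSum,
    ← Finset.sum_coe_sort S, ← tsum_fintype (L := SummationFilter.unconditional _)]
  exact congrArg (· ^ (1 / p)) (hsum.tsum_prod' fun s => hf s s.2)

/-- The restriction of `d` to `ℓ^p(G) ⊆ D_p(G)`; it is bounded by the closed graph theorem,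
since evaluation at a point is continuous on `ℓ^p`. -/
noncomputable def gradCLM : ℓ^(.ofReal p)(G, ℂ) →L[ℂ] ℓ^(.ofReal p)(S × G, ℂ) :=
  ContinuousLinearMap.ofSeqClosedGraph
    (g := { toFun x := gradLp x (memDp_of_memℓp pos_of_one_le_ofReal x.2)
            map_add' x y := lp.ext (map_add (grad S) (x : G → ℂ) y)
            map_smul' c x := lp.ext (map_smul (grad S) c (x : G → ℂ)) })
    fun u x y hu hy => by
      have eval {ι : Type _} (i : ι) (z : ℓ^(.ofReal p)(ι, ℂ)) :
          Tendsto (fun w : ℓ^(.ofReal p)(ι, ℂ) => w i) (𝓝 z) (𝓝 (z i)) :=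
        (lp.lipschitzWith_one_eval _ i).continuous.tendsto z
      refine lp.ext (funext fun i => tendsto_nhds_unique ((eval i y).comp hy) ?_)
      exact ((eval _ x).comp hu).sub ((eval _ x).comp hu)

theorem gradCLM_apply (x : ℓ^(.ofReal p)(G, ℂ)) :
    gradCLM (S := S) x = gradLp x (memDp_of_memℓp pos_of_one_le_ofReal x.2) := rfl

theorem inClosLpC_of_gradLp_mem_closure {f : G → ℂ} (hf : MemDp p S f)
    (h : gradLp f hf ∈ (gradCLM (S := S) (p := p)).range.topologicalClosure) :
    InClosLpC p S f := by
  have hp : 0 < p := pos_of_one_le_ofReal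
  refine ⟨hf, fun ε hε => ?_⟩
  rw [← SetLike.mem_coe, Submodule.topologicalClosure_coe, Metric.mem_closure_iff] at h
  obtain ⟨_, ⟨x, rfl⟩, hx⟩ := h ε hε
  have hxD : MemDp p S x := memDp_of_memℓp hp x.2
  refine ⟨x, (f - x) 1, (memLp'_iff_memℓp hp).2 x.2, ?_⟩
  rwa [sub_sub, ← sub_sub, dpNorm_sub_const_apply_one hp, ← norm_gradLp _ (memDp_sub hp hf hxD),
    gradLp_sub hf hxD, ← dist_eq_norm]

end lp

section dual

variable [Fact (1 ≤ ENNReal.ofReal p)] (g : StrongDual ℂ ℓ^(.ofReal p)(S × G, ℂ))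

open scoped Classical in
noncomputable def dualPullback (f : G → ℂ) : ℂ :=
  if hf : MemDp p S f then g (gradLp f hf) else 0

variable {g}

theorem dualPullback_of_memDp {f : G → ℂ} (hf : MemDp p S f) :
    dualPullback g f = g (gradLp f hf) :=
  dif_pos hf

theorem dualPullback_add {f h : G → ℂ} (hf : MemDp p S f) (hh : MemDp p S h) :
    dualPullback g (f + h) = dualPullback g f + dualPullback g h := by
  rw [dualPullback_of_memDp (memDp_add pos_of_one_le_ofReal hf hh), gradLp_add hf hh, map_add,
    dualPullback_of_memDp, dualPullback_of_memDp]

theorem dualPullback_smul (c : ℂ) {f : G → ℂ} (hf : MemDp p S f) :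
    dualPullback g (c • f) = c * dualPullback g f := by
  rw [dualPullback_of_memDp (memDp_smul pos_of_one_le_ofReal c hf), gradLp_smul c hf, map_smul,
    dualPullback_of_memDp hf, smul_eq_mul]

theorem dualPullback_const (c : ℂ) : dualPullback g (Function.const G c) = 0 := by
  unfold dualPullback
  split_ifs with h
  · rw [show gradLp _ h = 0 from lp.ext (grad_const c), map_zero]
  · rfl

theorem norm_dualPullback_le {f : G → ℂ} (hf : MemDp p S f) :
    ‖dualPullback g f‖ ≤ ‖g‖ * qNorm p S f := by
  rw [dualPullback_of_memDp hf, ← norm_gradLp f hf]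
  exact g.le_opNorm _

theorem dualPullback_translateFun (hS : Subgroup.closure (S : Set G) = ⊤)
    (hg : ∀ w ∈ (gradCLM (S := S) (p := p)).range, g w = 0) {f : G → ℂ} (hf : MemDp p S f)
    (x : G) : dualPullback g (translateFun f x) = dualPullback g f := by
  have hp : 0 < p := pos_of_one_le_ofReal
  have hfx := memDp_translateFun hp hS hf x
  rw [← sub_eq_zero, dualPullback_of_memDp hfx, dualPullback_of_memDp hf, ← map_sub,
    ← gradLp_sub hfx hf]
  exact hg _ ⟨⟨_, memℓp_translateFun_sub hp hS hf x⟩, rfl⟩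

end dual

section invariantFunctional

variable {T : (G → ℂ) → ℂ} {C : ℝ}
  (hadd : ∀ f h : G → ℂ, MemDp p S f → MemDp p S h → T (f + h) = T f + T h)
  (hsmul : ∀ (c : ℂ) (f : G → ℂ), MemDp p S f → T (c • f) = c * T f)
  (hC : ∀ f : G → ℂ, MemDp p S f → ‖T f‖ ≤ C * qNorm p S f)
  (hinv : ∀ (f : G → ℂ) (x : G), MemDp p S f → T (translateFun f x) = T f)

include hadd hsmul hC hinv in
/-- On `ℓ^p(G)`, `T` is a bounded functional taking the same value on all the Dirac masses. -/
theorem apply_eq_zero_of_memℓp [Infinite G] (hp : 1 < p) {u : G → ℂ}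
    (hu : Memℓp u (.ofReal p)) : T u = 0 := by
  classical
  have : Fact (1 ≤ ENNReal.ofReal p) := ⟨ENNReal.one_le_ofReal.2 hp.le⟩
  have hD (x : ℓ^(.ofReal p)(G, ℂ)) : MemDp p S x := memDp_of_memℓp (zero_lt_one.trans hp) x.2
  let L : StrongDual ℂ ℓ^(.ofReal p)(G, ℂ) := LinearMap.mkContinuous
    { toFun x := T x
      map_add' x y := hadd _ _ (hD x) (hD y)
      map_smul' c x := hsmul c _ (hD x) }
    (|C| * ‖gradCLM (S := S) (p := p)‖) fun x => calc
      ‖T x‖ ≤ C * ‖gradCLM (S := S) x‖ := by rw [gradCLM_apply, norm_gradLp]; exact hC _ (hD x)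
      _ ≤ |C| * (‖gradCLM (S := S) (p := p)‖ * ‖x‖) :=
        mul_le_mul (le_abs_self C) (gradCLM.le_opNorm x) (norm_nonneg _) (abs_nonneg C)
      _ = _ := (mul_assoc _ _ _).symm
  have hL (i : G) : L (lp.single _ i 1) = T (Pi.single 1 1) := by
    change T (Pi.single i 1) = _
    rw [← translateFun_single]
    exact hinv _ i (hD (lp.single _ 1 1))
  have hL0 : L = 0 := lp.continuousLinearMap_eq_zero_of_single_one ENNReal.ofReal_ne_top
    fun i => (hL i).trans <| lp.eq_zero_of_forall_apply_single_one_eq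
      (ENNReal.one_lt_ofReal.2 hp) ENNReal.ofReal_ne_top L hL
  exact congrArg (fun L : StrongDual ℂ ℓ^(.ofReal p)(G, ℂ) => L ⟨u, hu⟩) hL0

include hadd hsmul hC hinv in
theorem apply_eq_zero_of_inClosLpC [Infinite G] (hp : 1 < p)
    (hconst : ∀ c : ℂ, T (Function.const G c) = 0) {f : G → ℂ} (hf : InClosLpC p S f) :
    T f = 0 := by
  have hp0 : 0 < p := zero_lt_one.trans hp
  refine norm_le_zero_iff.1 (le_of_forall_pos_lt_add fun ε hε => ?_)
  obtain ⟨h, c, hh, hfhc⟩ := hf.2 (ε / (|C| + 1)) (by positivity)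
  have hh' := (memLp'_iff_memℓp hp0).1 hh
  have hhD := memDp_of_memℓp (S := S) hp0 hh'
  have hcD := memDp_const (S := S) hp0 c
  have hwD := memDp_sub hp0 (memDp_sub hp0 hf.1 hhD) hcD
  have hTf : T f = T (f - h - Function.const G c) := by
    have := hadd _ _ hwD (memDp_add hp0 hhD hcD)
    rw [sub_sub, sub_add_cancel, hadd _ _ hhD hcD,
      apply_eq_zero_of_memℓp hadd hsmul hC hinv hp hh', hconst, add_zero, add_zero] at this
    rwa [sub_sub]
  calc ‖T f‖ ≤ C * qNorm p S (f - h - Function.const G c) := hTf ▸ hC _ hwD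
    _ ≤ |C| * dpNorm p S (f - h - Function.const G c) :=
      mul_le_mul (le_abs_self C) (qNorm_le_dpNorm hp0 _) (Real.rpow_nonneg (dirSum_nonneg _) _)
        (abs_nonneg C)
    _ ≤ |C| * (ε / (|C| + 1)) := mul_le_mul_of_nonneg_left hfhc.le (abs_nonneg C)
    _ < 0 + ε := by
      rw [zero_add, mul_div_assoc', div_lt_iff₀ (by positivity)]
      nlinarith [abs_nonneg C]

end invariantFunctional

end PHB

open PHB

/-- `H̄¹_{(p)}(G) ≠ 0` iff there is a nonzero continuous
right-translation-invariant linear functional on `D_p(G)/ℂ`. -/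
theorem reduced_cohomology_nonzero_iff_TILF {G : Type*} [Group G] [Infinite G]
    (S : Finset G) (hS : PHB.SymmGen S) (p : ℝ) (hp : 1 < p) :
    (∃ f : G → ℂ, PHB.MemDp p S f ∧ ¬ PHB.InClosLpC p S f) ↔
    ∃ T : (G → ℂ) → ℂ,
      (∀ f h : G → ℂ, PHB.MemDp p S f → PHB.MemDp p S h → T (f + h) = T f + T h) ∧
      (∀ (c : ℂ) (f : G → ℂ), PHB.MemDp p S f → T (c • f) = c * T f) ∧
      (∀ c : ℂ, T (Function.const G c) = 0) ∧
      (∃ C : ℝ, ∀ f : G → ℂ, PHB.MemDp p S f → ‖T f‖ ≤ C * PHB.qNorm p S f) ∧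
      (∀ (f : G → ℂ) (x : G), PHB.MemDp p S f → T (PHB.translateFun f x) = T f) ∧
      (∃ f : G → ℂ, PHB.MemDp p S f ∧ T f ≠ 0) := by
  have : Fact (1 ≤ ENNReal.ofReal p) := ⟨ENNReal.one_le_ofReal.2 hp.le⟩
  constructor
  · rintro ⟨f, hf, hfncl⟩
    obtain ⟨g, hg, hgf⟩ := Submodule.exists_strongDual_eq_zero_of_notMem_topologicalClosure _
      (mt (inClosLpC_of_gradLp_mem_closure hf) hfncl)
    exact ⟨dualPullback g, fun _ _ => dualPullback_add, fun c _ => dualPullback_smul c,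
      dualPullback_const, ⟨‖g‖, fun _ => norm_dualPullback_le⟩,
      fun _ x hf => dualPullback_translateFun hS.2 hg hf x,
      f, hf, by rwa [dualPullback_of_memDp hf]⟩
  · rintro ⟨T, hadd, hsmul, hconst, ⟨C, hC⟩, hinv, f, hf, hTf⟩
    exact ⟨f, hf, fun hfcl => hTf (apply_eq_zero_of_inClosLpC hadd hsmul hC hinv hp hconst hfcl)⟩
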